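/- Let w be a Lyndon word of length at least 2 and let u be the longest proper nonempty prefix of w that is a Lyndon word, with w = uv. Then v is also a Lyndon word. -/

import Mathlib

open List

variable {α : Type*} [LinearOrder α]

/-- A Lyndon word: nonempty and lexicographically strictly smaller than all of
its proper nonempty suffixes. -/
def IsLyndon (w : List α) : Prop :=
  w ≠ [] ∧ ∀ i, 0 < i → i < w.length → w < w.drop i

/-- `fs` is the Lyndon factorization of `w` (factors listed with multiplicity,
so a necklace `f_i^{k_i}` contributes `k_i` copies of `f_i`): the factors
concatenate to `w`, each factor is Lyndon, and the sequence of factors is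
lexicographically non-increasing. -/
def IsLyndonFactorization (w : List α) (fs : List (List α)) : Prop :=
  fs.flatten = w ∧ (∀ f ∈ fs, IsLyndon f) ∧ fs.Chain' (fun a b => b ≤ a)

/-- All cyclic rotations of `w` (with multiplicity). -/
def rotations (w : List α) : List (List α) :=
  (List.range w.length).map fun i => w.drop i ++ w.take i

/-- The rotation moving the last character of `w` to the front. -/
def rotR (w : List α) : List α :=
  w.drop (w.length - 1) ++ w.take (w.length - 1)

/-- Number of maximal runs of equal consecutive characters of `s`. -/
def runCount (s : List α) : ℕ := (s.destutter (· ≠ ·)).length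

/-- The Burrows–Wheeler transform: concatenation of the last characters of all
`|w|` cyclic rotations of `w`, listed in lexicographic order. -/
def BWT (w : List α) : List α :=
  (List.insertionSort (· ≤ ·) (rotations w)).flatMap fun r => r.getLast?.toList

/-- The ω-order comparison: `x ≼_ω y` iff `x^∞ ≤ y^∞`, equivalently `xy ≤ yx`. -/
def omegaLE (x y : List α) : Prop := x ++ y ≤ y ++ x

instance : DecidableRel (omegaLE (α := α)) := fun x y =>
  inferInstanceAs (Decidable (x ++ y ≤ y ++ x))

/-- The bijective Burrows–Wheeler transform, expressed in terms of the Lyndon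
factorization `fs` of a word: concatenation of the last characters of all
cyclic rotations of all Lyndon factors (with multiplicity), listed in ω-order. -/
def BBWTof (fs : List (List α)) : List α :=
  (List.insertionSort omegaLE (fs.flatMap rotations)).flatMap fun r => r.getLast?.toList

section LyndonProof

private theorem lexlt_def {x y : List α} : x < y ↔ List.Lex (· < ·) x y := Iff.rfl

private theorem prefix_le' {x y : List α} (h : x <+: y) : x ≤ y := by
  obtain ⟨t, rfl⟩ := h
  rcases (match t with | [] => Or.inr rfl | _ :: _ => Or.inl List.Lex.nil :
      List.Lex (fun a b : α => a < b) [] t ∨ t = []) with ht | rfl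
  · exact le_of_lt (lexlt_def.mpr (by simpa using List.Lex.append_left _ ht x))
  · simp

private theorem prefix_lt' {x y : List α} (h : x <+: y) (hne : x ≠ y) : x < y :=
  lt_of_le_of_ne (prefix_le' h) hne

private theorem append_lt_left' {x y : List α} (z : List α) (h : x < y) :
    z ++ x < z ++ y := lexlt_def.mpr (List.Lex.append_left _ (lexlt_def.mp h) z)

private theorem lt_append_right' {x y : List α} (h : x < y) (z : List α) : x < y ++ z :=
  lexlt_def.mpr (List.Lex.append_right _ z (lexlt_def.mp h))

private theorem mismatch_lt : ∀ (k : ℕ) (x y : List α) (hkx : k < x.length)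
    (hky : k < y.length), x.take k = y.take k → x[k] < y[k] → x < y := by
  intro k
  induction k with
  | zero =>
    intro x y hkx hky ht hg
    match x, y with
    | a :: x, b :: y => exact List.Lex.rel (by simpa using hg)
    | [], _ => simp at hkx
    | _ :: _, [] => simp at hky
  | succ n ih =>
    intro x y hkx hky ht hg
    match x, y with
    | a :: x, b :: y =>
      rw [take_succ_cons, take_succ_cons, List.cons.injEq] at ht
      obtain ⟨rfl, ht⟩ := ht
      exact List.Lex.cons (ih x y (by simpa using hkx) (by simpa using hky) ht
        (by simpa using hg))
    | [], _ => simp at hkx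
    | _ :: _, [] => simp at hky

private theorem lex_elim : ∀ {x y : List α}, List.Lex (· < ·) x y →
    x <+: y ∨ ∃ k, ∃ hkx : k < x.length, ∃ hky : k < y.length,
      x.take k = y.take k ∧ x[k] < y[k]
  | _, _, .nil => Or.inl (nil_prefix)
  | _, _, @List.Lex.rel _ _ a l₁ b l₂ hab => Or.inr ⟨0, by simp, by simp, rfl, hab⟩
  | _, _, @List.Lex.cons _ _ a l₁ l₂ h => by
    rcases lex_elim h with hp | ⟨k, hkx, hky, ht, hg⟩
    · exact Or.inl (List.cons_prefix_cons.mpr ⟨rfl, hp⟩)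
    · exact Or.inr ⟨k + 1, by simpa using hkx, by simpa using hky,
        by simp [take_succ_cons, ht], by simpa using hg⟩

private theorem lt_elim {x y : List α} (h : x < y) :
    x <+: y ∨ ∃ k, ∃ hkx : k < x.length, ∃ hky : k < y.length,
      x.take k = y.take k ∧ x[k] < y[k] := lex_elim (lexlt_def.mp h)

private theorem lt_append_of_not_prefix {x y : List α} (h : x < y) (hnp : ¬ x <+: y)
    (z : List α) : x ++ z < y := by
  rcases lt_elim h with hp | ⟨k, hkx, hky, ht, hg⟩
  · exact absurd hp hnp
  · refine mismatch_lt k _ _ (by simp; omega) hky ?_ ?_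
    · rw [take_append_of_le_length (le_of_lt hkx), ht]
    · rwa [getElem_append_left hkx]

private theorem isLyndon_singleton (a : α) : IsLyndon [a] :=
  ⟨by simp, fun i hi hlt => by simp at hlt; omega⟩

private theorem getElem_idx_congr (l : List α) {i j : ℕ} (h : i = j) (hi : i < l.length) :
    l[i] = l[j]'(h ▸ hi) := by subst h; rfl

private theorem first_le {w : List α} (hw : IsLyndon w) {k : ℕ} (hk : k < w.length) :
    w[0]'(by omega) ≤ w[k] := by
  rcases Nat.eq_zero_or_pos k with rfl | hkpos
  · exact le_rfl
  have h := hw.2 k hkpos hk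
  rcases lt_elim h with hp | ⟨j, hjw, hjd, htj, hgj⟩
  · have := hp.length_le
    rw [length_drop] at this; omega
  · rw [getElem_drop] at hgj
    rcases Nat.eq_zero_or_pos j with rfl | hjpos
    · rw [getElem_idx_congr w (show k + 0 = k by omega)] at hgj
      exact le_of_lt hgj
    · have h0 : (w.take j)[0]'(by simp; try omega) = ((w.drop k).take j)[0]'(by simp [length_drop]; try omega) :=
        getElem_of_eq htj (by simp; try omega)
      rw [getElem_take, getElem_take, getElem_drop,
        getElem_idx_congr w (show k + 0 = k by omega)] at h0
      exact le_of_eq h0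

private theorem lyndon_take_append {w : List α} (hw : IsLyndon w) {k : ℕ} (hk : k < w.length)
    {c : α} (hc : w[k] < c) : IsLyndon (w.take k ++ [c]) := by
  have hlen : (w.take k ++ [c]).length = k + 1 := by simp; try omega
  refine ⟨by simp, fun i hi hilt => ?_⟩
  rw [hlen] at hilt
  rw [drop_append_of_le_length (by simp; try omega), drop_take]
  rcases lt_or_ge i k with hik | hik
  · -- 0 < i < k
    have hs := hw.2 i hi (by omega)
    rcases lt_elim hs with hp | ⟨j, hjw, hjs, htj, hgj⟩
    · have := hp.length_le
      rw [length_drop] at this; omega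
    rw [length_drop] at hjs
    rw [getElem_drop] at hgj
    rcases lt_or_ge j (k - i) with hjki | hjki
    · refine mismatch_lt j _ _ (by simp; try omega) (by simp [length_drop]; try omega) ?_ ?_
      · rw [take_append_of_le_length (by simp; try omega),
            take_append_of_le_length (by simp [length_drop]; try omega), take_take, take_take,
            Nat.min_eq_left (by omega : j ≤ k), Nat.min_eq_left (by omega : j ≤ k - i)]
        exact htj
      · rw [getElem_append_left (by simp; try omega), getElem_append_left (by simp [length_drop]; try omega),
            getElem_take, getElem_take, getElem_drop]
        exact hgj
    · -- mismatch at k - i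
      have hwk : w[k - i]'(by omega) < c := by
        rcases eq_or_lt_of_le hjki with heq | hlt2
        · subst heq
          exact lt_trans (lt_of_lt_of_eq hgj (getElem_idx_congr w (by omega) (by omega))) hc
        · have h0 : (w.take j)[k - i]'(by simp; try omega) = ((w.drop i).take j)[k - i]'(by simp [length_drop]; try omega) :=
            getElem_of_eq htj (by simp; try omega)
          rw [getElem_take, getElem_take, getElem_drop,
            getElem_idx_congr w (show i + (k - i) = k by omega)] at h0
          exact lt_of_eq_of_lt h0 hc
      refine mismatch_lt (k - i) _ _ (by simp; try omega) (by simp [length_drop]; try omega) ?_ ?_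
      · rw [take_append_of_le_length (by simp; try omega),
            take_append_of_le_length (by simp [length_drop]; try omega), take_take, take_take,
            Nat.min_self, Nat.min_eq_left (by omega : k - i ≤ k)]
        have := congrArg (take (k - i)) htj
        rwa [take_take, take_take, Nat.min_eq_left hjki] at this
      · rw [getElem_append_left (by simp; try omega), getElem_take,
            getElem_append_right (by simp [length_drop]; try omega)]
        simpa using hwk
  · -- i = k
    have hik' : i = k := by omega
    subst hik'
    rw [Nat.sub_self, take_zero, nil_append]
    refine mismatch_lt 0 _ _ (by simp; try omega) (by simp) rfl ?_
    rw [getElem_append_left (by simp; try omega), getElem_take]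
    simp only [getElem_cons_zero]
    exact lt_of_le_of_lt (first_le hw hk) hc

private theorem lyndon_head_lt {u p : List α} (hune : u ≠ []) (hup : u < p)
    (hp : IsLyndon p) : u ++ p < p := by
  by_cases hpre : u <+: p
  · obtain ⟨t, ht⟩ := hpre
    have htne : t ≠ [] := by
      rintro rfl
      rw [append_nil] at ht
      exact absurd ht (ne_of_lt hup)
    have h2 : p < t := by
      have h3 := hp.2 u.length (length_pos_iff.mpr hune)
        (by rw [← ht, length_append]; have := length_pos_iff.mpr htne; omega)
      have e : p.drop u.length = t := by rw [← ht, drop_left]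
      rwa [e] at h3
    calc u ++ p < u ++ t := append_lt_left' u h2
    _ = p := ht
  · exact lt_append_of_not_prefix hup hpre p

private theorem lyndon_append {u p : List α} (hu : IsLyndon u) (hp : IsLyndon p)
    (hup : u < p) : IsLyndon (u ++ p) := by
  refine ⟨by simp [hu.1], fun i hi hilt => ?_⟩
  rw [length_append] at hilt
  rcases lt_trichotomy i u.length with h | h | h
  · rw [drop_append_of_le_length h.le]
    have h1 : u < u.drop i := hu.2 i hi h
    have h2 : ¬ u <+: u.drop i := fun hp' => by
      have := hp'.length_le
      rw [length_drop] at this; omega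
    exact lt_of_lt_of_le (lt_append_of_not_prefix h1 h2 p)
      (prefix_le' (prefix_append _ _))
  · rw [h, drop_left]
    exact lyndon_head_lt hu.1 hup hp
  · have : i = u.length + (i - u.length) := by omega
    rw [this, drop_length_add_append]
    exact lt_trans (lyndon_head_lt hu.1 hup hp) (hp.2 _ (by omega) (by omega))

/-- If `w` is a Lyndon word of length at least 2, `u` is the longest proper
(nonempty) Lyndon prefix of `w`, and `w = uv`, then `v` is a Lyndon word. -/
theorem right_factor_lyndon (w u v : List α) (hw : IsLyndon w) (hlen : 2 ≤ w.length)
    (heq : w = u ++ v) (hu : IsLyndon u) (huprop : u ≠ w)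
    (humax : ∀ u', u' <+: w → u' ≠ w → IsLyndon u' → u'.length ≤ u.length) :
    IsLyndon v := by
  classical
  have hune : u ≠ [] := hu.1
  have hvne : v ≠ [] := by
    rintro rfl
    rw [append_nil] at heq
    exact huprop heq.symm
  have hul : 0 < u.length := length_pos_iff.mpr hune
  have hvl : 0 < v.length := length_pos_iff.mpr hvne
  have hwlen : w.length = u.length + v.length := by rw [heq, length_append]
  -- w < v
  have hwv : w < v := by
    have h := hw.2 u.length hul (by omega)
    have e : w.drop u.length = v := by rw [heq, drop_left]
    rwa [e] at h
  have hnp : ¬ w <+: v := fun h => by have := h.length_le; omega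
  obtain ⟨k, hkw, hkv, htake, hget⟩ := (lt_elim hwv).resolve_left hnp
  -- longest Lyndon prefix of v
  have h1P : 0 < 1 ∧ IsLyndon (v.take 1) := ⟨Nat.one_pos, by
    obtain ⟨a, t, rfl⟩ := List.exists_cons_of_ne_nil hvne
    simpa using isLyndon_singleton a⟩
  set m := Nat.findGreatest (fun n => 0 < n ∧ IsLyndon (v.take n)) v.length with hm
  have hmle : m ≤ v.length := Nat.findGreatest_le _
  have hPm : 0 < m ∧ IsLyndon (v.take m) := by
    rw [hm]
    exact Nat.findGreatest_spec (P := fun n => 0 < n ∧ IsLyndon (v.take n)) (n := v.length)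
      (m := 1) (by omega) h1P
  -- k < m
  have hkm : k < m := by
    by_contra hcon
    push_neg at hcon
    have hq : IsLyndon (v.take (k + 1)) := by
      have e : v.take (k + 1) = w.take k ++ [v[k]] := by
        rw [← take_concat_get hkv, concat_eq_append, htake]
      rw [e]
      exact lyndon_take_append hw hkw hget
    have h5 : k + 1 ≤ Nat.findGreatest (fun n => 0 < n ∧ IsLyndon (v.take n)) v.length :=
      Nat.le_findGreatest (by omega) ⟨by omega, hq⟩
    rw [← hm] at h5
    omega
  set p := v.take m with hpdef
  have hplen : p.length = m := by rw [hpdef, length_take]; omega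
  have hpLyn : IsLyndon p := hPm.2
  -- u < p
  have hup : u < p := by
    have hu_take : u = w.take u.length := by rw [heq, take_left]
    rcases le_or_gt u.length k with hle | hlt
    · -- u is a proper prefix of p
      have hupre : u <+: p := by
        rw [hu_take, hpdef]
        have e1 : w.take u.length = v.take u.length := by
          have := congrArg (take u.length) htake
          rwa [take_take, take_take, Nat.min_eq_left hle] at this
        rw [e1]
        have e2 : v.take u.length = (v.take m).take u.length := by
          rw [take_take, Nat.min_eq_left (by omega)]
        rw [e2]
        exact take_prefix _ _
      refine prefix_lt' hupre (fun hcon => ?_)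
      have : u.length = p.length := by rw [hcon]
      omega
    · -- mismatch at k
      refine mismatch_lt k _ _ hlt (by omega) ?_ ?_
      · have e1 : u.take k = w.take k := by
          rw [hu_take, take_take, Nat.min_eq_left (by omega)]
        have e2 : p.take k = v.take k := by
          rw [hpdef, take_take, Nat.min_eq_left (by omega)]
        rw [e1, e2, htake]
      · have e1 : u[k]'hlt = w[k] := by
          have := getElem_of_eq hu_take (i := k) hlt
          rwa [getElem_take] at this
        have e2 : p[k]'(by omega) = v[k] := by
          have : p[k]'(by omega) = (v.take m)[k]'(by rw [length_take]; omega) := rfl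
          rw [this, getElem_take]
        rw [e1, e2]
        exact hget
  -- conclude
  have hupLyn : IsLyndon (u ++ p) := lyndon_append hu hpLyn hup
  have hpre : u ++ p <+: w := by
    rw [heq]
    exact ⟨v.drop m, by rw [append_assoc, hpdef, take_append_drop]⟩
  by_cases hupw : u ++ p = w
  · have : p = v := append_cancel_left (by rw [hupw, heq])
    rwa [← this]
  · have := humax (u ++ p) hpre hupw hupLyn
    rw [length_append] at this
    omega

end LyndonProof
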